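/- arXiv:1505.03075 — 3 statements merged into one kernel-verified Lean document; each statement's English description precedes it below -/
import Mathlib

section
/- For 0 < α < 1 and any angle φ₀ with -π/2 ≤ φ₀ ≤ π/2, the integral of (e^{-z} - 1) z^{-(1+α)} along the ray {r e^{iφ₀} : 0 < r < ∞} equals Γ(-α). -/
open Real MeasureTheory

/-!
Put `ω = e^{iφ₀}` and `rayIntegral α c = ∫₀^∞ (e^{-rc} - 1) r^{-(1+α)} dr`. Since
`(rω)^s = r^s ω^s` for `r > 0`, the ray integral equals `ω^{-(1+α)} ω · rayIntegral α ω`, so it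
suffices to show `rayIntegral α c = c^α Γ(-α)` for `Re c ≥ 0`, `c ≠ 0`.

For real `c > 0`, integration by parts against `r^{-α}/(-α)` turns `rayIntegral α c` into
`-(c/α) ∫₀^∞ e^{-rc} r^{-α} dr`, a scaled Gamma integral. Both sides are holomorphic on
`Re c > 0`, hence agree there by the identity theorem. On the boundary `Re c = 0` the bound
`|e^{-rc} - 1| ≤ 2 min(r|c|, 1)` still dominates the integrand, so `rayIntegral α` is continuous
on `Re c ≥ 0` and the identity extends by continuity.
-/

open Set Filter Topology

theorem Complex.norm_exp_sub_one_le_two_mul_min {z : ℂ} (hz : z.re ≤ 0) :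
    ‖Complex.exp z - 1‖ ≤ 2 * min ‖z‖ 1 := by
  rcases le_total ‖z‖ 1 with h | h
  · rw [min_eq_left h]
    exact Complex.norm_exp_sub_one_le h
  · rw [min_eq_right h]
    calc ‖Complex.exp z - 1‖ ≤ ‖Complex.exp z‖ + ‖(1 : ℂ)‖ := norm_sub_le _ _
      _ ≤ 1 + 1 := by
        rw [Complex.norm_exp, norm_one]
        gcongr
        exact Real.exp_le_one_iff.mpr hz
      _ = 2 * 1 := by norm_num

theorem Complex.ofReal_mul_cpow {r : ℝ} (hr : 0 < r) {z : ℂ} (hz : z ≠ 0) (s : ℂ) :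
    ((r : ℂ) * z) ^ s = (r : ℂ) ^ s * z ^ s := by
  have hr' : (r : ℂ) ≠ 0 := Complex.ofReal_ne_zero.mpr hr.ne'
  rw [Complex.cpow_def_of_ne_zero (mul_ne_zero hr' hz), Complex.log_ofReal_mul hr hz,
    Complex.cpow_def_of_ne_zero hr', Complex.cpow_def_of_ne_zero hz, ← Complex.exp_add,
    Complex.ofReal_log hr.le, add_mul]

theorem integrableOn_min_one_mul_rpow {s : ℝ} (hs : -2 < s) (hs' : s < -1) :
    IntegrableOn (fun r : ℝ => min r 1 * r ^ s) (Ioi 0) := by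
  rw [← Ioc_union_Ioi_eq_Ioi zero_le_one]
  refine IntegrableOn.union ?_ ?_
  · have : IntegrableOn (fun r : ℝ => r ^ (s + 1)) (Ioc 0 1) :=
      (intervalIntegrable_iff_integrableOn_Ioc_of_le zero_le_one).mp
        (intervalIntegral.intervalIntegrable_rpow' (by linarith))
    refine this.congr_fun (fun r hr => ?_) measurableSet_Ioc
    show r ^ (s + 1) = _
    rw [min_eq_left hr.2, Real.rpow_add_one hr.1.ne', mul_comm]
  · refine (integrableOn_Ioi_rpow_of_lt hs' one_pos).congr_fun (fun r hr => ?_) measurableSet_Ioi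
    rw [min_eq_right (le_of_lt hr), one_mul]

theorem integrableOn_rpow_mul_exp_neg_mul {s b : ℝ} (hs : -1 < s) (hb : 0 < b) :
    IntegrableOn (fun x : ℝ => x ^ s * Real.exp (-b * x)) (Ioi 0) := by
  simpa only [Real.rpow_one] using integrableOn_rpow_mul_exp_neg_mul_rpow hs one_pos hb

theorem continuousOn_mul_ofReal_cpow {f : ℝ → ℂ} (hf : Continuous f) (s : ℂ) :
    ContinuousOn (fun r : ℝ => f r * (r : ℂ) ^ s) (Ioi 0) := fun r hr =>
  (hf.continuousAt.mul
    (Complex.continuousAt_ofReal_cpow_const r s (Or.inr (ne_of_gt hr)))).continuousWithinAt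

theorem norm_exp_neg_mul_mul_cpow (c : ℂ) (s : ℝ) {r : ℝ} (hr : 0 < r) :
    ‖Complex.exp (-(r * c)) * (r : ℂ) ^ (s : ℂ)‖ = r ^ s * Real.exp (-c.re * r) := by
  rw [norm_mul, Complex.norm_exp, Complex.norm_cpow_eq_rpow_re_of_pos hr, mul_comm]
  simp [mul_comm]

theorem integrableOn_exp_neg_mul_mul_cpow {c : ℂ} (hc : 0 < c.re) {s : ℝ} (hs : -1 < s) :
    IntegrableOn (fun r : ℝ => Complex.exp (-(r * c)) * (r : ℂ) ^ (s : ℂ)) (Ioi 0) :=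
  (integrableOn_rpow_mul_exp_neg_mul hs hc).mono'
    ((continuousOn_mul_ofReal_cpow (by fun_prop) _).aestronglyMeasurable measurableSet_Ioi)
    ((ae_restrict_mem measurableSet_Ioi).mono fun _ hr => (norm_exp_neg_mul_mul_cpow c s hr).le)

theorem norm_exp_neg_mul_sub_one_mul_cpow_le {c : ℂ} (hc : 0 ≤ c.re) (s : ℂ) {t : ℝ}
    (ht : 0 < t) :
    ‖(Complex.exp (-(t * c)) - 1) * (t : ℂ) ^ s‖ ≤ 2 * min (t * ‖c‖) 1 * t ^ s.re := by
  rw [norm_mul, Complex.norm_cpow_eq_rpow_re_of_pos ht]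
  gcongr
  refine (Complex.norm_exp_sub_one_le_two_mul_min ?_).trans_eq ?_
  · simpa using mul_nonneg ht.le hc
  · rw [norm_neg, norm_mul, Complex.norm_real, Real.norm_of_nonneg ht.le]

theorem tendsto_exp_neg_mul_sub_one_mul_cpow_nhdsGT_zero {c : ℂ} (hc : 0 ≤ c.re) {s : ℝ}
    (hs : -1 < s) :
    Tendsto (fun t : ℝ => (Complex.exp (-(t * c)) - 1) * (t : ℂ) ^ (s : ℂ)) (𝓝[>] 0) (𝓝 0) := by
  have hlim : Tendsto (fun t : ℝ => 2 * ‖c‖ * t ^ (1 + s)) (𝓝[>] 0) (𝓝 0) := by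
    have := ((Real.continuousAt_rpow_const 0 (1 + s) (Or.inr (by linarith))).tendsto.mono_left
      (nhdsWithin_le_nhds (s := Ioi 0))).const_mul (2 * ‖c‖)
    rwa [Real.zero_rpow (by linarith), mul_zero] at this
  refine squeeze_zero_norm' ?_ hlim
  filter_upwards [self_mem_nhdsWithin] with t (ht : 0 < t)
  refine (norm_exp_neg_mul_sub_one_mul_cpow_le hc s ht).trans ?_
  rw [Complex.ofReal_re, Real.rpow_one_add' ht.le (by linarith)]
  have : 0 ≤ t ^ s := Real.rpow_nonneg ht.le _
  nlinarith [min_le_left (t * ‖c‖) 1]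

theorem tendsto_exp_neg_mul_sub_one_mul_cpow_atTop {c : ℂ} (hc : 0 ≤ c.re) {s : ℝ} (hs : s < 0) :
    Tendsto (fun t : ℝ => (Complex.exp (-(t * c)) - 1) * (t : ℂ) ^ (s : ℂ)) atTop (𝓝 0) := by
  have hlim : Tendsto (fun t : ℝ => 2 * t ^ s) atTop (𝓝 0) := by
    simpa using (tendsto_rpow_neg_atTop (neg_pos.mpr hs)).const_mul 2
  refine squeeze_zero_norm' ?_ hlim
  filter_upwards [eventually_gt_atTop 0] with t ht
  refine (norm_exp_neg_mul_sub_one_mul_cpow_le hc s ht).trans ?_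
  rw [Complex.ofReal_re]
  have : 0 ≤ t ^ s := Real.rpow_nonneg ht.le _
  nlinarith [min_le_right (t * ‖c‖) 1]

section

variable {α : ℝ}

theorem norm_exp_neg_mul_sub_one_mul_cpow_le_max {c : ℂ} (hc : 0 ≤ c.re) {r : ℝ} (hr : 0 < r) :
    ‖(Complex.exp (-(r * c)) - 1) * (r : ℂ) ^ (-(1 + (α : ℂ)))‖
      ≤ 2 * max ‖c‖ 1 * (min r 1 * r ^ (-(1 + α))) := by
  have hmin : min (r * ‖c‖) 1 ≤ max ‖c‖ 1 * min r 1 := by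
    rcases le_total r 1 with h | h
    · rw [min_eq_left h, mul_comm]
      exact (min_le_left _ _).trans (by gcongr; exact le_max_left _ _)
    · rw [min_eq_right h, mul_one]
      exact (min_le_right _ _).trans (le_max_right _ _)
  refine (norm_exp_neg_mul_sub_one_mul_cpow_le hc _ hr).trans ?_
  have : 0 ≤ r ^ (-(1 + α)) := Real.rpow_nonneg hr.le _
  calc _ = 2 * min (r * ‖c‖) 1 * r ^ (-(1 + α)) := by
        simp only [neg_add_rev, Complex.add_re, Complex.neg_re, Complex.ofReal_re, Complex.one_re]
    _ ≤ 2 * (max ‖c‖ 1 * min r 1) * r ^ (-(1 + α)) := by gcongr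
    _ = _ := by ring

theorem integrableOn_exp_neg_mul_sub_one_mul_cpow (hα : 0 < α) (hα1 : α < 1) {c : ℂ}
    (hc : 0 ≤ c.re) :
    IntegrableOn (fun r : ℝ => (Complex.exp (-(r * c)) - 1) * (r : ℂ) ^ (-(1 + (α : ℂ)))) (Ioi 0) :=
  ((integrableOn_min_one_mul_rpow (by linarith) (by linarith)).const_mul _).mono'
    ((continuousOn_mul_ofReal_cpow (by fun_prop) _).aestronglyMeasurable measurableSet_Ioi)
    ((ae_restrict_mem measurableSet_Ioi).mono fun _ hr =>
      norm_exp_neg_mul_sub_one_mul_cpow_le_max hc hr)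

noncomputable def rayIntegral (α : ℝ) (c : ℂ) : ℂ :=
  ∫ r in Ioi (0 : ℝ), (Complex.exp (-(r * c)) - 1) * (r : ℂ) ^ (-(1 + (α : ℂ)))

theorem rayIntegral_eq_integral_exp_neg_mul_mul_cpow (hα : 0 < α) (hα1 : α < 1) {c : ℂ}
    (hc : 0 < c.re) :
    rayIntegral α c =
      -(c / α) * ∫ r in Ioi (0 : ℝ), Complex.exp (-(r * c)) * (r : ℂ) ^ ((-α : ℝ) : ℂ) := by
  set u : ℝ → ℂ := fun t => Complex.exp (-(t * c)) - 1
  set v : ℝ → ℂ := fun t => -((t : ℂ) ^ ((-α : ℝ) : ℂ)) / α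
  have hu : ∀ t ∈ Ioi (0 : ℝ), HasDerivAt u (-c * Complex.exp (-(t * c))) t := fun t _ => by
    have h : HasDerivAt (fun y : ℝ => -(y * c)) (-c) t :=
      ((hasDerivAt_id t).ofReal_comp.mul_const c).neg.congr_deriv (by simp)
    exact (h.cexp.sub_const 1).congr_deriv (by ring)
  have hv : ∀ t ∈ Ioi (0 : ℝ), HasDerivAt v ((t : ℂ) ^ (-(1 + (α : ℂ)))) t := fun t ht => by
    convert hasDerivAt_ofReal_cpow_const' ht.ne' (r := -(1 + (α : ℂ)))
      (by simpa [neg_add_rev] using hα.ne') using 1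
    funext y
    simp only [v]
    push_cast
    ring_nf
  have huv : u * v = fun t : ℝ => -((Complex.exp (-(t * c)) - 1) * (t : ℂ) ^ ((-α : ℝ) : ℂ)) / α := by
    funext t
    simp only [Pi.mul_apply, u, v]
    ring
  have h_zero : Tendsto (u * v) (𝓝[>] 0) (𝓝 0) := by
    have := (tendsto_exp_neg_mul_sub_one_mul_cpow_nhdsGT_zero hc.le (s := -α) (by linarith)).neg.div_const (α : ℂ)
    rwa [neg_zero, zero_div, ← huv] at this
  have h_infty : Tendsto (u * v) atTop (𝓝 0) := by
    have := (tendsto_exp_neg_mul_sub_one_mul_cpow_atTop hc.le (s := -α) (by linarith)).neg.div_const (α : ℂ)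
    rwa [neg_zero, zero_div, ← huv] at this
  have hu'v : EqOn (fun t : ℝ => -c * Complex.exp (-(t * c)) * v t)
      (fun t : ℝ => c / α * (Complex.exp (-(t * c)) * (t : ℂ) ^ ((-α : ℝ) : ℂ))) (Ioi 0) := by
    intro t _
    simp only [v]
    ring
  have hibp := integral_Ioi_mul_deriv_eq_deriv_mul hu hv
    (integrableOn_exp_neg_mul_sub_one_mul_cpow hα hα1 hc.le)
    (IntegrableOn.congr_fun ((integrableOn_exp_neg_mul_mul_cpow hc (by linarith)).const_mul _)
      hu'v.symm measurableSet_Ioi) h_zero h_infty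
  rw [rayIntegral, hibp, setIntegral_congr_fun measurableSet_Ioi hu'v, integral_const_mul]
  ring

theorem rayIntegral_ofReal (hα : 0 < α) (hα1 : α < 1) {b : ℝ} (hb : 0 < b) :
    rayIntegral α b = (b : ℂ) ^ (α : ℂ) * Complex.Gamma (-α) := by
  have hb0 : (b : ℂ) ≠ 0 := Complex.ofReal_ne_zero.mpr hb.ne'
  have hΓ : Complex.Gamma (1 - α) = -α * Complex.Gamma (-α) := by
    rw [← Complex.Gamma_add_one _ (by simpa using hα.ne'), neg_add_eq_sub]
  have hpow : (b : ℂ) * (1 / b) ^ (1 - (α : ℂ)) = (b : ℂ) ^ (α : ℂ) := by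
    rw [one_div, Complex.inv_cpow _ _ (by rw [Complex.arg_ofReal_of_nonneg hb.le]; exact pi_pos.ne),
      ← Complex.cpow_neg]
    conv_lhs => arg 1; rw [← Complex.cpow_one (b : ℂ)]
    rw [← Complex.cpow_add _ _ hb0]
    ring_nf
  have hint : ∫ r in Ioi (0 : ℝ), Complex.exp (-(r * b)) * (r : ℂ) ^ ((-α : ℝ) : ℂ)
      = (1 / b) ^ (1 - (α : ℂ)) * Complex.Gamma (1 - α) := by
    rw [← Complex.integral_cpow_mul_exp_neg_mul_Ioi (by simpa using hα1) hb]
    refine setIntegral_congr_fun measurableSet_Ioi fun r _ => ?_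
    push_cast
    ring_nf
  have hα0 : (α : ℂ) ≠ 0 := Complex.ofReal_ne_zero.mpr hα.ne'
  rw [rayIntegral_eq_integral_exp_neg_mul_mul_cpow hα hα1 (by simpa using hb), hint, hΓ, ← hpow]
  field_simp

theorem differentiableOn_rayIntegral (hα : 0 < α) (hα1 : α < 1) :
    DifferentiableOn ℂ (rayIntegral α) {c | 0 < c.re} := by
  intro c (hc : 0 < c.re)
  have hball : ∀ x ∈ Metric.ball c (c.re / 2), c.re / 2 ≤ x.re := fun x hx => by
    have := (Complex.abs_re_le_norm (x - c)).trans (mem_ball_iff_norm.mp hx).le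
    rw [Complex.sub_re] at this
    linarith [(abs_le.mp this).1]
  refine (hasDerivAt_integral_of_dominated_loc_of_deriv_le
    (F := fun x r => (Complex.exp (-(r * x)) - 1) * (r : ℂ) ^ (-(1 + (α : ℂ))))
    (F' := fun x r => -(Complex.exp (-(r * x)) * (r : ℂ) ^ ((-α : ℝ) : ℂ)))
    (bound := fun r => r ^ (-α) * Real.exp (-(c.re / 2) * r))
    (Metric.ball_mem_nhds c (half_pos hc))
    (Eventually.of_forall fun x =>
      (continuousOn_mul_ofReal_cpow (by fun_prop) _).aestronglyMeasurable measurableSet_Ioi)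
    (integrableOn_exp_neg_mul_sub_one_mul_cpow hα hα1 hc.le)
    (integrableOn_exp_neg_mul_mul_cpow hc (by linarith)).neg.aestronglyMeasurable
    ?_ (integrableOn_rpow_mul_exp_neg_mul (by linarith) (half_pos hc))
    ?_).2.differentiableAt.differentiableWithinAt
  · filter_upwards [ae_restrict_mem measurableSet_Ioi] with r (hr : 0 < r) x hx
    rw [norm_neg, norm_exp_neg_mul_mul_cpow x _ hr]
    gcongr
    nlinarith [hball x hx]
  · filter_upwards [ae_restrict_mem measurableSet_Ioi] with r (hr : 0 < r) x _
    have hpow : (r : ℂ) ^ ((-α : ℝ) : ℂ) = r * (r : ℂ) ^ (-(1 + (α : ℂ))) := by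
      rw [show ((-α : ℝ) : ℂ) = 1 + -(1 + (α : ℂ)) by push_cast; ring,
        Complex.cpow_add _ _ (Complex.ofReal_ne_zero.mpr hr.ne'), Complex.cpow_one]
    have h : HasDerivAt (fun y : ℂ => -(r * y)) (-r) x :=
      ((hasDerivAt_id x).const_mul (r : ℂ)).neg.congr_deriv (by simp)
    exact ((h.cexp.sub_const 1).mul_const _).congr_deriv (by rw [hpow]; ring)

theorem rayIntegral_eq_of_re_pos (hα : 0 < α) (hα1 : α < 1) {c : ℂ} (hc : 0 < c.re) :
    rayIntegral α c = c ^ (α : ℂ) * Complex.Gamma (-α) := by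
  have hU : IsOpen {z : ℂ | 0 < z.re} := isOpen_lt continuous_const Complex.continuous_re
  have hrhs : DifferentiableOn ℂ (fun z : ℂ => z ^ (α : ℂ) * Complex.Gamma (-α)) {z | 0 < z.re} :=
    fun z hz => ((differentiableAt_id.cpow (differentiableAt_const _)
      (Complex.mem_slitPlane_iff.mpr (Or.inl hz))).mul_const _).differentiableWithinAt
  refine ((differentiableOn_rayIntegral hα hα1).analyticOnNhd hU).eqOn_of_preconnected_of_frequently_eq
    (hrhs.analyticOnNhd hU) (convex_halfSpace_re_gt 0).isPreconnected (z₀ := 1) (by simp) ?_ hc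
  have hofReal : Tendsto ((↑) : ℝ → ℂ) (𝓝[≠] 1) (𝓝[≠] 1) := by
    simpa using Complex.continuous_ofReal.continuousWithinAt.tendsto_nhdsWithin
      (x := 1) (t := {1}ᶜ) fun x hx => by simpa using hx
  refine hofReal.frequently (Eventually.frequently ?_)
  filter_upwards [eventually_nhdsWithin_of_eventually_nhds (lt_mem_nhds one_pos)] with x hx
  exact rayIntegral_ofReal hα hα1 hx

theorem continuousWithinAt_rayIntegral (hα : 0 < α) (hα1 : α < 1) (c : ℂ) :
    ContinuousWithinAt (rayIntegral α) {z | 0 ≤ z.re} c := by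
  refine continuousWithinAt_of_dominated
    (bound := fun r => 2 * (‖c‖ + 1) * (min r 1 * r ^ (-(1 + α))))
    (Eventually.of_forall fun z =>
      (continuousOn_mul_ofReal_cpow (by fun_prop) _).aestronglyMeasurable measurableSet_Ioi)
    ?_ ((integrableOn_min_one_mul_rpow (by linarith) (by linarith)).const_mul _)
    (Eventually.of_forall fun r => (by fun_prop : Continuous fun z : ℂ =>
      (Complex.exp (-(r * z)) - 1) * (r : ℂ) ^ (-(1 + (α : ℂ)))).continuousWithinAt)
  filter_upwards [self_mem_nhdsWithin, nhdsWithin_le_nhds (Metric.ball_mem_nhds c one_pos)]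
    with z (hz : 0 ≤ z.re) hzc
  filter_upwards [ae_restrict_mem measurableSet_Ioi] with r (hr : 0 < r)
  refine (norm_exp_neg_mul_sub_one_mul_cpow_le_max hz hr).trans ?_
  have hz_le : ‖z‖ ≤ ‖c‖ + 1 :=
    (norm_le_norm_add_norm_sub' z c).trans (by linarith [mem_ball_iff_norm.mp hzc])
  have : 0 ≤ min r 1 * r ^ (-(1 + α)) := by positivity
  gcongr
  exact max_le hz_le (by linarith [norm_nonneg c])

theorem rayIntegral_eq_of_re_nonneg (hα : 0 < α) (hα1 : α < 1) {c : ℂ} (hc : 0 ≤ c.re)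
    (hc0 : c ≠ 0) : rayIntegral α c = c ^ (α : ℂ) * Complex.Gamma (-α) := by
  have hslit : c ∈ Complex.slitPlane := by
    rcases hc.lt_or_eq with h | h
    · exact Or.inl h
    · exact Or.inr fun him => hc0 (Complex.ext h.symm him)
  have : (𝓝[{z : ℂ | 0 < z.re}] c).NeBot :=
    mem_closure_iff_nhdsWithin_neBot.mp (by rwa [Complex.closure_setOfPred_lt_re])
  have hlhs : Tendsto (rayIntegral α) (𝓝[{z | 0 < z.re}] c) (𝓝 (rayIntegral α c)) :=
    (continuousWithinAt_rayIntegral hα hα1 c).mono (ofPred_subset_ofPred.mpr fun _ => le_of_lt)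
  have hrhs : Tendsto (fun z : ℂ => z ^ (α : ℂ) * Complex.Gamma (-α)) (𝓝[{z | 0 < z.re}] c)
      (𝓝 (c ^ (α : ℂ) * Complex.Gamma (-α))) :=
    ((continuousAt_cpow_const hslit).mul continuousAt_const).continuousWithinAt
  exact tendsto_nhds_unique (hlhs.congr' (eventually_nhdsWithin_of_forall
    (s := {z : ℂ | 0 < z.re}) fun _ hz => rayIntegral_eq_of_re_pos hα hα1 hz)) hrhs

end

/-- The integral of `(e^{-z} - 1) z^{-(1+α)}` along the ray `{r e^{iφ₀} : 0 < r < ∞}`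
equals `Γ(-α)`. -/
theorem ray_integral_Gamma_neg (α φ₀ : ℝ) (hα : 0 < α) (hα1 : α < 1)
    (hφ₀ : -(π / 2) ≤ φ₀) (hφ₀' : φ₀ ≤ π / 2) :
    ∫ r in Set.Ioi (0 : ℝ),
      (Complex.exp (-((r : ℂ) * Complex.exp (Complex.I * (φ₀ : ℂ)))) - 1) *
        ((r : ℂ) * Complex.exp (Complex.I * (φ₀ : ℂ))) ^ (-(1 + (α : ℂ))) *
        Complex.exp (Complex.I * (φ₀ : ℂ))
      = Complex.Gamma (-(α : ℂ)) := by
  set ω := Complex.exp (Complex.I * φ₀)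
  have hω0 : ω ≠ 0 := Complex.exp_ne_zero _
  have hω : 0 ≤ ω.re := by
    simpa [ω, Complex.exp_re] using Real.cos_nonneg_of_mem_Icc ⟨hφ₀, hφ₀'⟩
  have hsplit : ∫ r in Ioi (0 : ℝ), (Complex.exp (-(r * ω)) - 1) * (r * ω) ^ (-(1 + (α : ℂ))) * ω
      = rayIntegral α ω * (ω ^ (-(1 + (α : ℂ))) * ω) := by
    rw [rayIntegral, ← integral_mul_const]
    refine setIntegral_congr_fun measurableSet_Ioi fun r hr => ?_
    rw [Complex.ofReal_mul_cpow hr hω0]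
    ring
  have hcancel : ω ^ (α : ℂ) * (ω ^ (-(1 + (α : ℂ))) * ω) = 1 := by
    rw [← mul_assoc, ← Complex.cpow_add _ _ hω0, show (α : ℂ) + -(1 + α) = -1 by ring,
      Complex.cpow_neg_one, inv_mul_cancel₀ hω0]
  rw [hsplit, rayIntegral_eq_of_re_nonneg hα hα1 hω hω0, mul_right_comm, hcancel, one_mul]
end

section
/- Maximum principle for the right fractional derivative: let 0 < α < 1 and let φ be a Schwartz function on ℝ with φ(x₀) = 0 for some x₀ and φ(x) ≥ 0 for all x ≥ x₀. Then (D_right)^α φ(x₀) ≤ 0, with equality if and only if φ(x) = 0 for all x ≥ x₀. -/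
/-!
Since `0 < α < 1`, the prefactor `1 / Γ(-α)` is negative (`Γ(1 - α) = -α Γ(-α)` with
`Γ(1 - α) > 0`), while at a minimum `x₀` of `φ` on `[x₀, ∞)` the integrand is nonnegative.
The integral converges because the integrand is `O((t - x₀)^(-α))` near `x₀` (Lipschitz bound)
and `O((t - x₀)^(-1-α))` at infinity (boundedness). By continuity it vanishes only if the
integrand vanishes identically.
-/

open Real MeasureTheory

/-- The right fractional derivative of order `α`:
`(D_right)^α φ(x) = (1/Γ(-α)) ∫_x^∞ (φ(t) - φ(x))/(t-x)^{1+α} dt`. -/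
noncomputable def Dright (α : ℝ) (φ : ℝ → ℝ) (x : ℝ) : ℝ :=
  (1 / Real.Gamma (-α)) * ∫ t in Set.Ioi x, (φ t - φ x) / (t - x) ^ (1 + α)

open Set NNReal

theorem Real.Gamma_neg_of_neg_one_lt_of_neg {s : ℝ} (h1 : -1 < s) (h0 : s < 0) :
    Gamma s < 0 := by
  have hpos : 0 < Gamma (s + 1) := Gamma_pos_of_pos (by linarith)
  rw [Gamma_add_one h0.ne] at hpos
  exact neg_of_mul_pos_right hpos h0.le

theorem SchwartzMap.lipschitzWith_seminorm {E F : Type*} [NormedAddCommGroup E]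
    [NormedSpace ℝ E] [NormedAddCommGroup F] [NormedSpace ℝ F] (f : SchwartzMap E F) :
    LipschitzWith (SchwartzMap.seminorm ℝ 0 1 f).toNNReal f := by
  refine lipschitzWith_of_nnnorm_fderiv_le f.differentiable fun x => ?_
  rw [← NNReal.coe_le_coe, coe_nnnorm, ← norm_iteratedFDeriv_one]
  exact (f.norm_iteratedFDeriv_le_seminorm ℝ 1 x).trans (Real.le_coe_toNNReal _)

theorem IsOpen.setIntegral_eq_zero_iff_of_nonneg {X : Type*} [TopologicalSpace X]
    [MeasurableSpace X] [OpensMeasurableSpace X] {μ : Measure X} [μ.IsOpenPosMeasure]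
    {U : Set X} {f : X → ℝ} (hU : IsOpen U) (hf : ContinuousOn f U) (hf0 : ∀ x ∈ U, 0 ≤ f x)
    (hfi : IntegrableOn f U μ) : ∫ x in U, f x ∂μ = 0 ↔ EqOn f 0 U := by
  rw [integral_eq_zero_iff_of_nonneg_ae (ae_restrict_of_forall_mem hU.measurableSet hf0) hfi]
  exact ⟨fun h => Measure.eqOn_open_of_ae_eq h hU hf continuousOn_const,
    ae_restrict_of_forall_mem hU.measurableSet⟩

section Integrability

variable {x : ℝ}

theorem integrableOn_Ioc_sub_rpow {p c : ℝ} (hp : -1 < p) (hc : 0 ≤ c) :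
    IntegrableOn (fun t => (t - x) ^ p) (Ioc x (x + c)) := by
  have h := (intervalIntegral.intervalIntegrable_rpow' hp (a := 0) (b := c)).comp_sub_right x
  simp only [zero_add, add_comm c x] at h
  exact (intervalIntegrable_iff_integrableOn_Ioc_of_le (by linarith)).mp h

theorem integrableOn_Ioi_sub_rpow {p c : ℝ} (hp : p < -1) (hc : 0 < c) :
    IntegrableOn (fun t => (t - x) ^ p) (Ioi (x + c)) := by
  have h := integrableOn_Ioi_rpow_of_lt hp hc
  rw [← (measurePreserving_sub_right volume x).integrableOn_comp_preimage
    (measurableEmbedding_subRight x)] at h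
  simpa [Function.comp_def, preimage_sub_const_Ioi, add_comm] using h

variable {α : ℝ} {g : ℝ → ℝ}

theorem continuousOn_sub_div_rpow (hg : Continuous g) :
    ContinuousOn (fun t => (g t - g x) / (t - x) ^ (1 + α)) (Ioi x) := by
  intro t ht
  have hpos : 0 < t - x := sub_pos.2 ht
  exact ((hg.sub continuous_const).continuousAt.div
    ((continuous_sub_right x).continuousAt.rpow_const (Or.inl hpos.ne'))
    (rpow_pos_of_pos hpos _).ne').continuousWithinAt

theorem norm_sub_div_rpow_eq {t : ℝ} (ht : x < t) :
    ‖(g t - g x) / (t - x) ^ (1 + α)‖ = |g t - g x| * (t - x) ^ (-(1 + α)) := by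
  have hpos : 0 < t - x := sub_pos.2 ht
  rw [norm_div, Real.norm_eq_abs, Real.norm_eq_abs, abs_of_pos (rpow_pos_of_pos hpos _),
    rpow_neg hpos.le, div_eq_mul_inv]

theorem integrableOn_Ioi_sub_div_rpow {K : ℝ≥0} {M : ℝ} (hlip : LipschitzWith K g)
    (hbdd : ∀ t, ‖g t‖ ≤ M) (hα : 0 < α) (hα1 : α < 1) :
    IntegrableOn (fun t => (g t - g x) / (t - x) ^ (1 + α)) (Ioi x) := by
  have hcont := continuousOn_sub_div_rpow (x := x) (α := α) hlip.continuous
  have near : IntegrableOn (fun t => (g t - g x) / (t - x) ^ (1 + α)) (Ioc x (x + 1)) := by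
    refine ((integrableOn_Ioc_sub_rpow (x := x) (p := -α) (by linarith) zero_le_one).const_mul
      K).mono' ((hcont.mono Ioc_subset_Ioi_self).aestronglyMeasurable measurableSet_Ioc)
      (ae_restrict_of_forall_mem measurableSet_Ioc fun t ht => ?_)
    have hpos : 0 < t - x := sub_pos.2 ht.1
    have hlip_t : |g t - g x| ≤ K * (t - x) := by
      simpa [Real.dist_eq, abs_of_pos hpos] using hlip.dist_le_mul t x
    calc ‖(g t - g x) / (t - x) ^ (1 + α)‖ = |g t - g x| * (t - x) ^ (-(1 + α)) :=
          norm_sub_div_rpow_eq ht.1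
      _ ≤ K * (t - x) * (t - x) ^ (-(1 + α)) := by gcongr
      _ = K * (t - x) ^ (-α) := by
          rw [mul_assoc, ← rpow_one_add' hpos.le (by linarith)]
          ring_nf
  have far : IntegrableOn (fun t => (g t - g x) / (t - x) ^ (1 + α)) (Ioi (x + 1)) := by
    refine ((integrableOn_Ioi_sub_rpow (x := x) (p := -(1 + α)) (by linarith) one_pos).const_mul
      (2 * M)).mono' ((hcont.mono (Ioi_subset_Ioi (by linarith))).aestronglyMeasurable
      measurableSet_Ioi) (ae_restrict_of_forall_mem measurableSet_Ioi fun t ht => ?_)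
    have hxt : x < t := by linarith [mem_Ioi.1 ht]
    have hdiff : |g t - g x| ≤ 2 * M :=
      (norm_sub_le (g t) (g x)).trans (by linarith [hbdd t, hbdd x])
    rw [norm_sub_div_rpow_eq hxt]
    gcongr
  simpa [Ioc_union_Ioi_eq_Ioi] using near.union far

end Integrability

section MaximumPrinciple

variable {α : ℝ} {g : ℝ → ℝ} {x : ℝ}

theorem one_div_Gamma_neg_neg (hα : 0 < α) (hα1 : α < 1) : 1 / Gamma (-α) < 0 :=
  one_div_neg.mpr (Gamma_neg_of_neg_one_lt_of_neg (by linarith) (by linarith))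

theorem sub_div_rpow_nonneg_of_isMinOn (hmin : IsMinOn g (Ici x) x) {t : ℝ} (ht : x < t) :
    0 ≤ (g t - g x) / (t - x) ^ (1 + α) :=
  div_nonneg (sub_nonneg.2 (hmin (Ioi_subset_Ici_self ht))) (rpow_nonneg (sub_pos.2 ht).le _)

theorem Dright_nonpos_of_isMinOn (hα : 0 < α) (hα1 : α < 1) (hmin : IsMinOn g (Ici x) x) :
    Dright α g x ≤ 0 :=
  mul_nonpos_of_nonpos_of_nonneg (one_div_Gamma_neg_neg hα hα1).le
    (setIntegral_nonneg measurableSet_Ioi fun _ => sub_div_rpow_nonneg_of_isMinOn hmin)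

theorem Dright_eq_zero_iff_of_isMinOn {K : ℝ≥0} {M : ℝ} (hα : 0 < α) (hα1 : α < 1)
    (hlip : LipschitzWith K g) (hbdd : ∀ t, ‖g t‖ ≤ M) (hmin : IsMinOn g (Ici x) x) :
    Dright α g x = 0 ↔ ∀ t ∈ Ici x, g t = g x := by
  rw [Dright, mul_eq_zero, or_iff_right (one_div_Gamma_neg_neg hα hα1).ne,
    isOpen_Ioi.setIntegral_eq_zero_iff_of_nonneg (continuousOn_sub_div_rpow hlip.continuous)
      (fun _ => sub_div_rpow_nonneg_of_isMinOn hmin)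
      (integrableOn_Ioi_sub_div_rpow hlip hbdd hα hα1)]
  constructor
  · intro h t ht
    rcases (mem_Ici.1 ht).eq_or_lt with rfl | hlt
    · rfl
    simpa [sub_eq_zero, (rpow_pos_of_pos (sub_pos.2 hlt) (1 + α)).ne'] using h hlt
  · intro h t ht
    simp [h t (Ioi_subset_Ici_self ht)]

end MaximumPrinciple

/-- Maximum principle for the right fractional derivative. -/
theorem maximum_principle (α : ℝ) (hα : 0 < α) (hα1 : α < 1)
    (φ : SchwartzMap ℝ ℝ) (x₀ : ℝ) (h0 : φ x₀ = 0) (hpos : ∀ x, x₀ ≤ x → 0 ≤ φ x) :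
    Dright α (fun x => φ x) x₀ ≤ 0 ∧
      (Dright α (fun x => φ x) x₀ = 0 ↔ ∀ x, x₀ ≤ x → φ x = 0) := by
  have hmin : IsMinOn (fun x => φ x) (Ici x₀) x₀ := fun x hx => by
    simpa [h0] using hpos x hx
  refine ⟨Dright_nonpos_of_isMinOn hα hα1 hmin, ?_⟩
  rw [Dright_eq_zero_iff_of_isMinOn hα hα1 φ.lipschitzWith_seminorm
    (φ.norm_le_seminorm ℝ) hmin]
  simp [h0]
end

section
/- Comparison principle: let 0 < α < 1 and φ, ψ Schwartz functions with φ(x₀) = ψ(x₀) for some x₀ and φ(x) ≥ ψ(x) for all x ≥ x₀. Then (D_right)^α φ(x₀) ≤ (D_right)^α ψ(x₀), with equality if and only if φ = ψ on [x₀, ∞). -/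
open Real MeasureTheory Set

lemma schwartz_lipschitz_bound (φ : SchwartzMap ℝ ℝ) :
    ∃ C : ℝ, ∀ x y : ℝ, |φ y - φ x| ≤ C * |y - x| := by
  obtain ⟨C, -, hC⟩ := φ.decay 0 1
  refine ⟨C, fun x y => ?_⟩
  have key : ∀ z : ℝ, ‖fderiv ℝ (⇑φ) z‖ ≤ C := by
    intro z
    rw [← norm_iteratedFDeriv_zero (𝕜 := ℝ) (f := fderiv ℝ (⇑φ)) (x := z),
      norm_iteratedFDeriv_fderiv]
    simpa using hC z
  have h := Convex.norm_image_sub_le_of_norm_fderiv_le (C := C) (f := ⇑φ)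
    (fun z _ => (φ.differentiable).differentiableAt) (fun z _ => key z)
    convex_univ (mem_univ x) (mem_univ y)
  simpa [Real.norm_eq_abs] using h

lemma rpow_near_integrable (x₀ α : ℝ) (hα : 0 < α) (hα1 : α < 1) :
    IntegrableOn (fun t : ℝ => (t - x₀) ^ (-α)) (Ioc x₀ (x₀+1)) := by
  have h1 : IntervalIntegrable (fun u : ℝ => u ^ (-α)) volume 0 1 :=
    intervalIntegral.intervalIntegrable_rpow' (by linarith)
  have h2 := h1.comp_sub_right x₀
  rw [intervalIntegrable_iff_integrableOn_Ioc_of_le (by linarith)] at h2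
  simpa [add_comm] using h2

lemma rpow_far_integrable (x₀ α : ℝ) (hα : 0 < α) :
    IntegrableOn (fun t : ℝ => (t - x₀) ^ (-(1+α))) (Ioi (x₀+1)) := by
  have h1 : IntegrableOn (fun u : ℝ => u ^ (-(1+α))) (Ioi 1) :=
    integrableOn_Ioi_rpow_of_lt (by linarith) one_pos
  have h2 := ((measurePreserving_sub_right volume x₀).integrableOn_comp_preimage
    (MeasurableEquiv.subRight x₀).measurableEmbedding).mpr h1
  have heq : (fun t : ℝ => t - x₀) ⁻¹' Ioi 1 = Ioi (x₀+1) := by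
    ext t; simp only [Set.mem_preimage, Set.mem_Ioi]; constructor <;> intro <;> linarith
  rw [heq] at h2
  exact h2

lemma frac_integrand_integrable (α : ℝ) (hα : 0 < α) (hα1 : α < 1)
    (φ : SchwartzMap ℝ ℝ) (x₀ : ℝ) :
    IntegrableOn (fun t => (φ t - φ x₀) / (t - x₀) ^ (1 + α)) (Ioi x₀) := by
  have hcont : ContinuousOn (fun t => (φ t - φ x₀) / (t - x₀) ^ (1 + α)) (Ioi x₀) := by
    apply ContinuousOn.div
    · exact (φ.continuous.sub continuous_const).continuousOn
    · exact ((continuous_id.sub continuous_const).rpow_const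
        (fun t => Or.inr (by positivity))).continuousOn
    · intro t ht
      have hs : 0 < t - x₀ := sub_pos.mpr ht
      positivity
  rw [← Set.Ioc_union_Ioi_eq_Ioi (le_add_of_nonneg_right (zero_le_one) : x₀ ≤ x₀ + 1)]
  apply IntegrableOn.union
  · -- near part
    obtain ⟨C, hC⟩ := schwartz_lipschitz_bound φ
    apply Integrable.mono' ((rpow_near_integrable x₀ α hα hα1).const_mul C)
    · exact (hcont.mono (Set.Ioc_subset_Ioi_self)).aestronglyMeasurable measurableSet_Ioc
    · refine (ae_restrict_iff' measurableSet_Ioc).mpr (ae_of_all _ fun t ht => ?_)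
      have hs : 0 < t - x₀ := sub_pos.mpr ht.1
      have hpow : 0 < (t - x₀) ^ (1 + α) := by positivity
      rw [Real.norm_eq_abs, abs_div, abs_of_pos hpow]
      have hnum : |φ t - φ x₀| ≤ C * (t - x₀) := by
        have := hC x₀ t
        rwa [abs_of_pos hs] at this
      calc |φ t - φ x₀| / (t - x₀) ^ (1 + α)
          ≤ (C * (t - x₀)) / (t - x₀) ^ (1 + α) := by
            exact (div_le_div_iff_of_pos_right hpow).mpr hnum
        _ = C * (t - x₀) ^ (-α) := by
            rw [mul_div_assoc]
            congr 1
            have hsplit : (t - x₀) ^ (1 + α) = (t - x₀) * (t - x₀) ^ α := by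
              rw [Real.rpow_add hs, Real.rpow_one]
            rw [hsplit, div_mul_eq_div_div, div_self hs.ne', Real.rpow_neg hs.le, one_div]
  · -- far part
    obtain ⟨M, hM0, hM⟩ := φ.decay 0 0
    apply Integrable.mono' ((rpow_far_integrable x₀ α hα).const_mul (2*M))
    · exact (hcont.mono (fun t ht => by simp only [Set.mem_Ioi] at *; linarith)).aestronglyMeasurable
        measurableSet_Ioi
    · refine (ae_restrict_iff' measurableSet_Ioi).mpr (ae_of_all _ fun t ht => ?_)
      simp only [Set.mem_Ioi] at ht
      have hs : 0 < t - x₀ := by linarith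
      have hpow : 0 < (t - x₀) ^ (1 + α) := by positivity
      rw [Real.norm_eq_abs, abs_div, abs_of_pos hpow]
      have hb : ∀ z : ℝ, |φ z| ≤ M := fun z => by simpa using hM z
      have hnum : |φ t - φ x₀| ≤ 2 * M := by
        calc |φ t - φ x₀| ≤ |φ t| + |φ x₀| := abs_sub _ _
          _ ≤ M + M := add_le_add (hb t) (hb x₀)
          _ = 2 * M := by ring
      calc |φ t - φ x₀| / (t - x₀) ^ (1 + α)
          ≤ (2 * M) / (t - x₀) ^ (1 + α) := (div_le_div_iff_of_pos_right hpow).mpr hnum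
        _ = 2 * M * (t - x₀) ^ (-(1+α)) := by
            rw [Real.rpow_neg hs.le, div_eq_mul_inv]

/-- Comparison principle for the right fractional derivative. -/
theorem comparison_principle (α : ℝ) (hα : 0 < α) (hα1 : α < 1)
    (φ ψ : SchwartzMap ℝ ℝ) (x₀ : ℝ) (h0 : φ x₀ = ψ x₀)
    (hge : ∀ x, x₀ ≤ x → ψ x ≤ φ x) :
    Dright α (fun x => φ x) x₀ ≤ Dright α (fun x => ψ x) x₀ ∧
      (Dright α (fun x => φ x) x₀ = Dright α (fun x => ψ x) x₀ ↔
        ∀ x, x₀ ≤ x → φ x = ψ x) := by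
  have hGamma : Real.Gamma (-α) < 0 := by
    have h1 : 0 < Real.Gamma (-α + 1) := by
      rw [show -α + 1 = 1 - α by ring]
      exact Real.Gamma_pos_of_pos (by linarith)
    rw [Real.Gamma_add_one (by linarith : -α ≠ 0)] at h1
    nlinarith
  have hc : (1 : ℝ) / Real.Gamma (-α) < 0 := div_neg_of_pos_of_neg one_pos hGamma
  have hφ := frac_integrand_integrable α hα hα1 φ x₀
  have hψ := frac_integrand_integrable α hα hα1 ψ x₀
  have hmono : ∀ t ∈ Ioi x₀,
      (ψ t - ψ x₀) / (t - x₀) ^ (1 + α) ≤ (φ t - φ x₀) / (t - x₀) ^ (1 + α) := by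
    intro t ht
    have hs : 0 < t - x₀ := sub_pos.mpr ht
    have hpow : 0 < (t - x₀) ^ (1 + α) := by positivity
    apply (div_le_div_iff_of_pos_right hpow).mpr
    have := hge t (le_of_lt ht)
    rw [h0]; linarith
  have hIle : (∫ t in Ioi x₀, (ψ t - ψ x₀) / (t - x₀) ^ (1 + α)) ≤
      ∫ t in Ioi x₀, (φ t - φ x₀) / (t - x₀) ^ (1 + α) :=
    setIntegral_mono_on hψ hφ measurableSet_Ioi hmono
  constructor
  · exact mul_le_mul_of_nonpos_left hIle hc.le
  constructor
  · intro heq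
    have hIeq : (∫ t in Ioi x₀, (φ t - φ x₀) / (t - x₀) ^ (1 + α)) =
        ∫ t in Ioi x₀, (ψ t - ψ x₀) / (t - x₀) ^ (1 + α) :=
      mul_left_cancel₀ (ne_of_lt hc) heq
    have hzero : (∫ t in Ioi x₀,
        ((φ t - φ x₀) / (t - x₀) ^ (1 + α) - (ψ t - ψ x₀) / (t - x₀) ^ (1 + α))) = 0 := by
      rw [integral_sub hφ hψ, hIeq, sub_self]
    have hnn : 0 ≤ᵐ[volume.restrict (Ioi x₀)] fun t =>
        (φ t - φ x₀) / (t - x₀) ^ (1 + α) - (ψ t - ψ x₀) / (t - x₀) ^ (1 + α) :=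
      (ae_restrict_iff' measurableSet_Ioi).mpr
        (ae_of_all _ fun t ht => sub_nonneg.mpr (hmono t ht))
    have hae := (integral_eq_zero_iff_of_nonneg_ae hnn (hφ.sub hψ)).mp hzero
    have hae2 : ∀ᵐ t, t ∈ Ioi x₀ →
        (φ t - φ x₀) / (t - x₀) ^ (1 + α) - (ψ t - ψ x₀) / (t - x₀) ^ (1 + α) = 0 :=
      (ae_restrict_iff' measurableSet_Ioi).mp hae
    intro x hx
    rcases eq_or_lt_of_le hx with rfl | hlt
    · exact h0
    by_contra hne
    set U : Set ℝ := {t | x₀ < t ∧ φ t - ψ t ≠ 0} with hU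
    have hUopen : IsOpen U := by
      have : U = Ioi x₀ ∩ (fun t => φ t - ψ t) ⁻¹' ({0}ᶜ) := by
        ext t; simp [hU, Set.mem_Ioi, and_comm]
      rw [this]
      exact isOpen_Ioi.inter (isOpen_compl_singleton.preimage (φ.continuous.sub ψ.continuous))
    have hUne : U.Nonempty := ⟨x, hlt, sub_ne_zero.mpr hne⟩
    have hUsub : U ⊆ {t | ¬ (t ∈ Ioi x₀ →
        (φ t - φ x₀) / (t - x₀) ^ (1 + α) - (ψ t - ψ x₀) / (t - x₀) ^ (1 + α) = 0)} := by
      rintro t ⟨ht1, ht2⟩ hcontra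
      have hz := hcontra ht1
      have hs : 0 < t - x₀ := sub_pos.mpr ht1
      have hpow : (0:ℝ) < (t - x₀) ^ (1 + α) := by positivity
      rw [div_sub_div_same] at hz
      rcases div_eq_zero_iff.mp hz with hnum | hden
      · apply ht2; rw [h0] at hnum; linarith
      · exact absurd hden hpow.ne'
    exact absurd (measure_mono_null hUsub (ae_iff.mp hae2))
      (hUopen.measure_ne_zero volume hUne)
  · intro heqset
    unfold Dright
    congr 1
    apply setIntegral_congr_fun measurableSet_Ioi
    intro t ht
    simp only
    rw [heqset t (le_of_lt ht), h0]
end
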